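/- Let G be a multigraph, e an edge of G, and k ≥ Δ(G)+1 an integer. If e is a k-critical edge of G, then G−e has a k-dense subgraph H containing both endvertices of e such that e is also a k-critical edge of H+e. -/

import Mathlib

/-- A finite multigraph: finite vertex and edge types, each edge has an unordered pair of
endvertices, and there are no loops. -/
structure Multigraph where
  V : Type
  E : Type
  [fintypeV : Fintype V]
  [fintypeE : Fintype E]
  ends : E → Sym2 V
  loopless : ∀ e, ¬ (ends e).IsDiag

attribute [instance] Multigraph.fintypeV Multigraph.fintypeE

namespace Multigraph

section Basic

variable (G : Multigraph)

/-- The degree of a vertex: the number of edges incident with it. -/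
noncomputable def degree (v : G.V) : ℕ := {e : G.E | v ∈ G.ends e}.ncard

/-- The maximum degree Δ(G). -/
noncomputable def maxDegree : ℕ := sSup (Set.range G.degree)

/-- The number of edges joining `x` and `y` (the multiplicity e_G(x,y)). -/
noncomputable def mult (x y : G.V) : ℕ := {e : G.E | G.ends e = s(x, y)}.ncard

/-- The maximum multiplicity μ(G). -/
noncomputable def maxMult : ℕ := sSup {m : ℕ | ∃ x y : G.V, G.mult x y = m}

/-- `c` is a proper edge coloring, with palette `{1,…,k}`, of the edges in `D`
(edges sharing an endvertex get distinct colors). -/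
def IsProperColoringOn (k : ℕ) (D : Set G.E) (c : G.E → ℕ) : Prop :=
  (∀ e ∈ D, c e ∈ Set.Icc 1 k) ∧
  ∀ e ∈ D, ∀ f ∈ D, e ≠ f → (∃ v, v ∈ G.ends e ∧ v ∈ G.ends f) → c e ≠ c f

/-- A proper `k`-edge-coloring of all of `G`. -/
def IsProperColoring (k : ℕ) (c : G.E → ℕ) : Prop := G.IsProperColoringOn k Set.univ c

/-- The chromatic index of the subgraph of `G` consisting of the edges in `D`
(vertices are irrelevant for edge colorings). -/
noncomputable def chromIndexOn (D : Set G.E) : ℕ := sInf {k | ∃ c, G.IsProperColoringOn k D c}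

/-- The chromatic index χ'(G). -/
noncomputable def chromIndex : ℕ := G.chromIndexOn Set.univ

/-- The set of colors of the palette `{1,…,k}` missing at `v`, where only the edges in `D`
are regarded as colored. -/
def missingOn (k : ℕ) (D : Set G.E) (c : G.E → ℕ) (v : G.V) : Set ℕ :=
  {i | i ∈ Set.Icc 1 k ∧ ∀ e ∈ D, v ∈ G.ends e → c e ≠ i}

/-- `X` is elementary: missing-color sets of distinct vertices of `X` are disjoint. -/
def IsElementaryOn (k : ℕ) (D : Set G.E) (c : G.E → ℕ) (X : Set G.V) : Prop :=
  ∀ u ∈ X, ∀ v ∈ X, u ≠ v → G.missingOn k D c u ∩ G.missingOn k D c v = ∅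

/-- The boundary ∂_G(X): edges with an endvertex in `X` and an endvertex outside `X`. -/
def boundary (X : Set G.V) : Set G.E :=
  {e | (∃ v ∈ G.ends e, v ∈ X) ∧ (∃ v ∈ G.ends e, v ∉ X)}

/-- `X` is strongly closed (w.r.t. the coloring `c` of the edges in `D`): every color on a
boundary edge of `X` is present at every vertex of `X`, and the colors on the boundary edges
are pairwise distinct. -/
def IsStronglyClosedOn (D : Set G.E) (c : G.E → ℕ) (X : Set G.V) : Prop :=
  (∀ e ∈ G.boundary X ∩ D, ∀ v ∈ X, ∃ f ∈ D, v ∈ G.ends f ∧ c f = c e) ∧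
  ∀ e ∈ G.boundary X ∩ D, ∀ f ∈ G.boundary X ∩ D, e ≠ f → c e ≠ c f

end Basic

/-- A subgraph of `G`: a set of vertices together with a set of edges all of whose
endvertices belong to the vertex set. -/
structure Subgraph (G : Multigraph) where
  verts : Set G.V
  edges : Set G.E
  support : ∀ e ∈ edges, ∀ v, v ∈ G.ends e → v ∈ verts

section Sub

variable (G : Multigraph)

/-- The whole graph, as a subgraph of itself. -/
def top : G.Subgraph := ⟨Set.univ, Set.univ, fun _ _ _ _ => Set.mem_univ _⟩

/-- `H` is a `k`-dense subgraph: it has an odd number of vertices and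
`|E(H)| = (|V(H)|-1)·k/2`. -/
def IsDense (k : ℕ) (H : G.Subgraph) : Prop :=
  Odd H.verts.ncard ∧ 2 * H.edges.ncard = (H.verts.ncard - 1) * k

/-- `H` is a `k`-dense subgraph of `G - F` (the graph obtained by deleting the edges of `F`). -/
def IsDenseIn (F : Set G.E) (k : ℕ) (H : G.Subgraph) : Prop :=
  H.edges ∩ F = ∅ ∧ G.IsDense k H

/-- `H` is a maximal `k`-dense subgraph of `G - F`. -/
def IsMaximalDenseIn (F : Set G.E) (k : ℕ) (H : G.Subgraph) : Prop :=
  G.IsDenseIn F k H ∧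
  ∀ H' : G.Subgraph, G.IsDenseIn F k H' → H.verts ⊆ H'.verts → H.edges ⊆ H'.edges →
    H.verts = H'.verts ∧ H.edges = H'.edges

/-- The density Γ(H) of a subgraph `H` of `G`:
`max { 2|E(H')|/(|V(H')|-1) : H' ⊆ H, |V(H')| ≥ 3 odd }` (and `0` if there is no such `H'`,
since in `ℝ` the supremum of the empty set is `0`). -/
noncomputable def densityOf (H : G.Subgraph) : ℝ :=
  sSup {x : ℝ | ∃ H' : G.Subgraph, H'.verts ⊆ H.verts ∧ H'.edges ⊆ H.edges ∧
    3 ≤ H'.verts.ncard ∧ Odd H'.verts.ncard ∧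
    x = 2 * (H'.edges.ncard : ℝ) / ((H'.verts.ncard : ℝ) - 1)}

/-- The density Γ(G). -/
noncomputable def density : ℝ := G.densityOf G.top

/-- `e` is a `k`-critical edge of `G`: `χ'(G-e) = k < χ'(G) = k+1`. -/
def IsCriticalEdge (k : ℕ) (e : G.E) : Prop :=
  G.chromIndexOn {e}ᶜ = k ∧ G.chromIndex = k + 1

/-- Degree of `v` in the subgraph consisting of the edges in `D`. -/
noncomputable def degreeOn (D : Set G.E) (v : G.V) : ℕ := {e : G.E | e ∈ D ∧ v ∈ G.ends e}.ncard

/-- Maximum degree of the subgraph consisting of the edges in `D`. -/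
noncomputable def maxDegreeOn (D : Set G.E) : ℕ := sSup (Set.range (G.degreeOn D))

/-- Multiplicity of the pair `x,y` in the subgraph consisting of the edges in `D`. -/
noncomputable def multOn (D : Set G.E) (x y : G.V) : ℕ :=
  {e : G.E | e ∈ D ∧ G.ends e = s(x, y)}.ncard

/-- Maximum multiplicity of the subgraph consisting of the edges in `D`. -/
noncomputable def maxMultOn (D : Set G.E) : ℕ := sSup {m : ℕ | ∃ x y : G.V, G.multOn D x y = m}

/-- The simple graph underlying the subgraph of `G` with edge set `D`. -/
def simpleOn (D : Set G.E) : SimpleGraph G.V where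
  Adj a b := a ≠ b ∧ ∃ e ∈ D, G.ends e = s(a, b)
  symm := by
    constructor
    rintro a b ⟨hab, e, he, hh⟩
    exact ⟨hab.symm, e, he, hh.trans Sym2.eq_swap⟩
  loopless := by constructor; rintro a ⟨h, -⟩; exact h rfl

/-- The diameter (in `ℕ∞`) of the subgraph with vertex set `S` and edge set `D`:
the greatest distance between a pair of its vertices. -/
noncomputable def diamOn (S : Set G.V) (D : Set G.E) : ℕ∞ :=
  sSup {d : ℕ∞ | ∃ u ∈ S, ∃ v ∈ S, (G.simpleOn D).edist u v = d}

/-- The distance (in `ℕ∞`) between two edges of `G`: the length of a shortest path connecting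
an endvertex of `e` and an endvertex of `f`. -/
noncomputable def edgeDist (e f : G.E) : ℕ∞ :=
  sInf {d : ℕ∞ | ∃ u v : G.V, u ∈ G.ends e ∧ v ∈ G.ends f ∧
    (G.simpleOn Set.univ).edist u v = d}

/-- A matching: a set of edges no two of which share an endvertex. -/
def IsMatching (M : Set G.E) : Prop :=
  ∀ e ∈ M, ∀ f ∈ M, e ≠ f → ∀ v : G.V, v ∈ G.ends e → v ∉ G.ends f

/-- An edge `e ∈ E_G(x,y)` is fully `G`-saturated if `d_G(x) = d_G(y) = Δ(G)` and
`e_G(x,y) = μ(G)`. -/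
def IsFullySaturated (e : G.E) : Prop :=
  ∃ x y : G.V, G.ends e = s(x, y) ∧ G.degree x = G.maxDegree ∧ G.degree y = G.maxDegree ∧
    G.mult x y = G.maxMult

/-- One step along a Kempe `(α,β)`-chain: an edge of `D` colored `α` or `β` joining the
two vertices. -/
def chainStep (D : Set G.E) (c : G.E → ℕ) (α β : ℕ) (a b : G.V) : Prop :=
  ∃ e ∈ D, G.ends e = s(a, b) ∧ (c e = α ∨ c e = β)

/-- `u` and `v` lie on the same `(α,β)`-chain, i.e. `P_u(α,β) = P_v(α,β)`. -/
def sameChain (D : Set G.E) (c : G.E → ℕ) (α β : ℕ) (u v : G.V) : Prop :=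
  Relation.ReflTransGen (G.chainStep D c α β) u v

end Sub

/-- The Goldberg–Seymour theorem (proved by Chen, Jing and Zang), as a hypothesis:
every multigraph `G'` with `χ'(G') ≥ Δ(G')+2` satisfies `χ'(G') = ⌈Γ(G')⌉`. -/
def GoldbergSeymour : Prop :=
  ∀ G' : Multigraph, G'.maxDegree + 2 ≤ G'.chromIndex → (G'.chromIndex : ℤ) = ⌈G'.density⌉

/-- A (general) multi-fan at `x` with respect to the edge `e₀ ∈ E_G(x,y₀)` and the coloring
`c` of the edges in `D` with palette `{1,…,k}`: a sequence `(x, e₀, y₀, e₁, y₁, …, e_p, y_p)`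
of vertices and pairwise distinct edges with `e_i ∈ E_G(x, y_i)` and, for `i ≥ 1`,
`c(e_i)` missing at `y_j` for some `j < i`. -/
structure MultiFan (G : Multigraph) (k : ℕ) (D : Set G.E) (c : G.E → ℕ)
    (x : G.V) (e₀ : G.E) (y₀ : G.V) where
  p : ℕ
  edge : Fin (p + 1) → G.E
  vx : Fin (p + 1) → G.V
  edge_zero : edge 0 = e₀
  vx_zero : vx 0 = y₀
  ends_eq : ∀ i, G.ends (edge i) = s(x, vx i)
  edge_inj : Function.Injective edge
  fan_cond : ∀ i : Fin (p + 1), i ≠ 0 →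
    ∃ j : Fin (p + 1), j < i ∧ c (edge i) ∈ G.missingOn k D c (vx j)

namespace MultiFan

variable {G : Multigraph} {k : ℕ} {D : Set G.E} {c : G.E → ℕ} {x : G.V} {e₀ : G.E} {y₀ : G.V}

/-- The vertex set `V(F)` of a multi-fan. -/
def verts (F : MultiFan G k D c x e₀ y₀) : Set G.V := insert x (Set.range F.vx)

/-- `F` is a subsequence of `F'`. -/
def Subseq (F F' : MultiFan G k D c x e₀ y₀) : Prop :=
  ∃ ι : Fin (F.p + 1) → Fin (F'.p + 1), StrictMono ι ∧
    ∀ i, F'.edge (ι i) = F.edge i ∧ F'.vx (ι i) = F.vx i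

/-- `F` is a maximal multi-fan: no multi-fan contains it as a proper subsequence. -/
def IsMaximal (F : MultiFan G k D c x e₀ y₀) : Prop :=
  ∀ F' : MultiFan G k D c x e₀ y₀, F.Subseq F' → F'.p = F.p

/-- `F` contains no `i`-edge. -/
def NoColor (F : MultiFan G k D c x e₀ y₀) (i : ℕ) : Prop :=
  ∀ j, F.edge j ∈ D → c (F.edge j) ≠ i

/-- `F` is a multi-fan without `i`-edges that is maximal among such. -/
def IsMaximalWithout (F : MultiFan G k D c x e₀ y₀) (i : ℕ) : Prop :=
  F.NoColor i ∧
  ∀ F' : MultiFan G k D c x e₀ y₀, F'.NoColor i → F.Subseq F' → F'.p = F.p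

/-- `e_F(x,z)`: the number of edges of the multi-fan `F` joining `x` and `z`. -/
noncomputable def multAt (F : MultiFan G k D c x e₀ y₀) (z : G.V) : ℕ :=
  Nat.card {j : Fin (F.p + 1) // F.vx j = z}

end MultiFan

end Multigraph

/-! A counting argument shows that a multigraph on an odd number `n` of vertices with `m` edges
needs at least `2m/(n-1)` colors, since each color class is a matching of at most `(n-1)/2`
edges. By Goldberg–Seymour, `χ'(G) = k + 1 ≥ Δ(G) + 2` forces `Γ(G) > k`, so some odd `H`
has `2|E(H)| > (|V(H)|-1)k`. As `G - e` is `k`-colorable, the counting bound for `H - e` leaves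
no room: `e ∈ E(H)` and `H - e` is `k`-dense. The counting bound then also gives
`χ'(H - e) ≥ k` and `χ'(H) > k`. -/

namespace Multigraph

variable {G : Multigraph}

lemma exists_isProperColoringOn (G : Multigraph) (D : Set G.E) :
    ∃ m c, G.IsProperColoringOn m D c := by
  refine ⟨Fintype.card G.E, fun e => (Fintype.equivFin G.E e).val + 1, ?_, ?_⟩
  · intro e _
    have := (Fintype.equivFin G.E e).isLt
    simp only [Set.mem_Icc]
    omega
  · intro e _ f _ hef _ h
    simp only [add_left_inj] at h
    exact hef ((Fintype.equivFin G.E).injective (Fin.ext h))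

lemma exists_isProperColoringOn_chromIndexOn (G : Multigraph) (D : Set G.E) :
    ∃ c, G.IsProperColoringOn (G.chromIndexOn D) D c := by
  obtain ⟨m, c, h⟩ := G.exists_isProperColoringOn D
  exact Nat.sInf_mem (⟨m, c, h⟩ : {k | ∃ c, G.IsProperColoringOn k D c}.Nonempty)

lemma IsProperColoringOn.mono {k : ℕ} {D D' : Set G.E} {c : G.E → ℕ}
    (h : G.IsProperColoringOn k D' c) (hD : D ⊆ D') : G.IsProperColoringOn k D c :=
  ⟨fun e he => h.1 e (hD he), fun e he f hf => h.2 e (hD he) f (hD hf)⟩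

lemma chromIndexOn_le_of_isProperColoringOn {k : ℕ} {D : Set G.E} {c : G.E → ℕ}
    (h : G.IsProperColoringOn k D c) : G.chromIndexOn D ≤ k :=
  Nat.sInf_le ⟨c, h⟩

lemma chromIndexOn_mono {D D' : Set G.E} (hD : D ⊆ D') : G.chromIndexOn D ≤ G.chromIndexOn D' :=
  let ⟨_, hc⟩ := G.exists_isProperColoringOn_chromIndexOn D'
  chromIndexOn_le_of_isProperColoringOn (hc.mono hD)

lemma IsMatching.two_mul_card_le {M : Finset G.E} (hM : G.IsMatching M) {S : Set G.V}
    (hS : ∀ e ∈ M, ∀ v, v ∈ G.ends e → v ∈ S) : 2 * M.card ≤ S.ncard := by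
  classical
  have hdisj : (M : Set G.E).PairwiseDisjoint fun e => (G.ends e).toFinset := by
    intro e he f hf hef
    exact Finset.disjoint_left.2 fun v hve hvf =>
      hM e he f hf hef v (Sym2.mem_toFinset.1 hve) (Sym2.mem_toFinset.1 hvf)
  calc 2 * M.card = (M.biUnion fun e => (G.ends e).toFinset).card := by
        rw [Finset.card_biUnion hdisj, Finset.sum_congr rfl fun e _ =>
          Sym2.card_toFinset_of_not_isDiag _ (G.loopless e), Finset.sum_const, smul_eq_mul,
          mul_comm]
    _ ≤ S.toFinset.card := Finset.card_le_card fun v hv => by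
        obtain ⟨e, he, hv⟩ := Finset.mem_biUnion.1 hv
        exact Set.mem_toFinset.2 (hS e he v (Sym2.mem_toFinset.1 hv))
    _ = S.ncard := (Set.ncard_eq_toFinset_card' S).symm

lemma IsProperColoringOn.isMatching_colorClass {k : ℕ} {D : Set G.E} {c : G.E → ℕ}
    (h : G.IsProperColoringOn k D c) (i : ℕ) : G.IsMatching {e | e ∈ D ∧ c e = i} :=
  fun e he f hf hef v hve hvf => h.2 e he.1 f hf.1 hef ⟨v, hve, hvf⟩ (he.2.trans hf.2.symm)

/-- On an odd vertex set `S`, each color class is a matching with at most `(|S|-1)/2` edges. -/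
lemma IsProperColoringOn.two_mul_ncard_le {k : ℕ} {D : Set G.E} {c : G.E → ℕ}
    (h : G.IsProperColoringOn k D c) {S : Set G.V}
    (hS : ∀ e ∈ D, ∀ v, v ∈ G.ends e → v ∈ S) (hodd : Odd S.ncard) :
    2 * D.ncard ≤ (S.ncard - 1) * k := by
  classical
  set colorClass : ℕ → Finset G.E := fun i => D.toFinset.filter (c · = i)
  have hclass : ∀ i, 2 * (colorClass i).card ≤ S.ncard - 1 := by
    intro i
    have hM : G.IsMatching (colorClass i) := by
      simpa [colorClass] using h.isMatching_colorClass i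
    have := hM.two_mul_card_le fun e he => hS e (by simp_all [colorClass])
    obtain ⟨m, hm⟩ := hodd
    omega
  calc 2 * D.ncard = ∑ i ∈ Finset.Icc 1 k, 2 * (colorClass i).card := by
        rw [← Finset.mul_sum, Set.ncard_eq_toFinset_card' D,
          Finset.card_eq_sum_card_fiberwise (t := Finset.Icc 1 k) fun e he => by
            simpa using h.1 e (Set.mem_toFinset.1 he)]
    _ ≤ ∑ _i ∈ Finset.Icc 1 k, (S.ncard - 1) := Finset.sum_le_sum fun i _ => hclass i
    _ = (S.ncard - 1) * k := by simp [mul_comm]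

lemma Subgraph.two_mul_ncard_edges_le (H : G.Subgraph) (D : Set G.E) (hD : D ⊆ H.edges)
    (hodd : Odd H.verts.ncard) :
    2 * D.ncard ≤ (H.verts.ncard - 1) * G.chromIndexOn D :=
  let ⟨_, hc⟩ := G.exists_isProperColoringOn_chromIndexOn D
  hc.two_mul_ncard_le (fun e he => H.support e (hD he)) hodd

def Subgraph.deleteEdge (H : G.Subgraph) (e : G.E) : G.Subgraph :=
  ⟨H.verts, H.edges \ {e}, fun f hf => H.support f hf.1⟩

lemma Subgraph.isDense_deleteEdge {k : ℕ} {H : G.Subgraph} {e : G.E} (hodd : Odd H.verts.ncard)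
    (hH : (H.verts.ncard - 1) * k < 2 * H.edges.ncard)
    (hχ : G.chromIndexOn (H.edges \ {e}) ≤ k) :
    e ∈ H.edges ∧ G.IsDense k (H.deleteEdge e) := by
  have hle : 2 * (H.edges \ {e}).ncard ≤ (H.verts.ncard - 1) * k :=
    (H.two_mul_ncard_edges_le _ Set.sdiff_subset hodd).trans (Nat.mul_le_mul_left _ hχ)
  have heH : e ∈ H.edges := by
    by_contra heH
    rw [Set.sdiff_singleton_eq_self heH] at hle
    omega
  have hcard := Set.ncard_sdiff_singleton_of_mem heH
  -- `(|V(H)| - 1) k` is even, so it lies exactly between `2 (|E(H)| - 1)` and `2 |E(H)|`.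
  obtain ⟨t, ht⟩ := ((Nat.Odd.sub_odd hodd odd_one).mul_right k : Even _)
  exact ⟨heH, hodd, by simp only [deleteEdge]; omega⟩

lemma exists_subgraph_of_lt_density {k : ℕ} (hk : (k : ℝ) < G.density) :
    ∃ H : G.Subgraph, 3 ≤ H.verts.ncard ∧ Odd H.verts.ncard ∧
      (H.verts.ncard - 1) * k < 2 * H.edges.ncard := by
  by_contra! hsparse
  refine hk.not_ge (Real.sSup_le ?_ (Nat.cast_nonneg k))
  rintro _ ⟨H, -, -, h3, hodd, rfl⟩
  have hpos : (0 : ℝ) < H.verts.ncard - 1 := by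
    have : (3 : ℝ) ≤ H.verts.ncard := by exact_mod_cast h3
    linarith
  have hcast : ((H.verts.ncard - 1 : ℕ) : ℝ) = H.verts.ncard - 1 := by
    rw [Nat.cast_sub (by omega), Nat.cast_one]
  rw [div_le_iff₀ hpos, ← hcast]
  exact_mod_cast (hsparse H h3 hodd).trans_eq (mul_comm _ _)

lemma GoldbergSeymour.lt_density (hGS : GoldbergSeymour) {k : ℕ}
    (hχ : G.chromIndex = k + 1) (hk : G.maxDegree + 1 ≤ k) : (k : ℝ) < G.density := by
  have := hGS G (by omega)
  rw [hχ] at this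
  exact Int.lt_ceil.1 (by omega)

end Multigraph

/-- **Lemma 2.3.** (Assuming the Goldberg–Seymour theorem.) If `e` is a `k`-critical edge of
`G` and `k ≥ Δ(G)+1`, then `G-e` has a `k`-dense subgraph `H` containing both endvertices of
`e` such that `e` is also a `k`-critical edge of `H+e`. -/
theorem critical_edge_dense_subgraph (hGS : Multigraph.GoldbergSeymour)
    (G : Multigraph) (k : ℕ) (e : G.E)
    (hk : G.maxDegree + 1 ≤ k) (he : G.IsCriticalEdge k e) :
    ∃ H : G.Subgraph, e ∉ H.edges ∧ (∀ v, v ∈ G.ends e → v ∈ H.verts) ∧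
      G.IsDense k H ∧
      G.chromIndexOn H.edges = k ∧ G.chromIndexOn (insert e H.edges) = k + 1 := by
  obtain ⟨hχe, hχ⟩ := he
  obtain ⟨H, h3, hodd, hH⟩ := G.exists_subgraph_of_lt_density (hGS.lt_density hχ hk)
  have hsub : H.edges \ {e} ⊆ {e}ᶜ := fun f hf => hf.2
  obtain ⟨heH, hdense⟩ := H.isDense_deleteEdge hodd hH (hχe ▸ G.chromIndexOn_mono hsub)
  have hins : insert e (H.deleteEdge e).edges = H.edges := by
    rw [Multigraph.Subgraph.deleteEdge, Set.insert_sdiff_singleton, Set.insert_eq_of_mem heH]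
  refine ⟨H.deleteEdge e, fun h => h.2 rfl, fun v hv => H.support e heH v hv, hdense,
    le_antisymm (hχe ▸ G.chromIndexOn_mono hsub) ?_, le_antisymm ?_ ?_⟩
  · have := H.two_mul_ncard_edges_le (H.edges \ {e}) Set.sdiff_subset hodd
    exact Nat.le_of_mul_le_mul_left (hdense.2.symm.trans_le this)
      (show 0 < H.verts.ncard - 1 by omega)
  · exact hins ▸ hχ ▸ G.chromIndexOn_mono (Set.subset_univ _)
  · have := H.two_mul_ncard_edges_le H.edges subset_rfl hodd
    rw [hins]
    exact Nat.lt_of_mul_lt_mul_left (hH.trans_le this)
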